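/- Let B ≥ 1 and k ≥ 2 be integers and let G be the graph consisting of a path r = v_0, v_1, …, v_{B−1} (with B − 1 edges) together with k additional leaves u_1, …, u_k each adjacent only to v_{B−1}, with unit edge costs, prizes π(u_i) = 1 for each i and π = 0 on all other vertices. In the flow LP with variables f_p ≥ 0 for every path p from r and x_e ≥ 0 for every edge e, constraints (X): for every edge e and vertex v, ∑_{p ∈ P_v : e ∈ p} f_p ≤ x_e (where P_v is the set of r–v paths); (F): for every vertex v, ∑_{p ∈ P_v} f_p ≤ 1; (B): ∑_{e∈E} x_e ≤ B; and objective ∑_{v∈V} π(v)·∑_{p∈P_v} f_p, the assignment f_{p_i} = B/(B+k−1) for the unique r–u_i path p_i for each i (f_p = 0 for all other paths) and x_e = B/(B+k−1) for every edge e is feasible and has objective value k·B/(B+k−1). -/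
import Mathlib

open scoped Classical

/-- The integrality-gap graph: a path `v_0, v_1, …, v_{B-1}` (the path vertices are
`Sum.inl i`) together with `k` leaves `u_1, …, u_k` (the vertices `Sum.inr j`),
each adjacent only to the last path vertex `v_{B-1}`. -/
def gapGraph (B k : ℕ) : SimpleGraph (Fin B ⊕ Fin k) :=
  SimpleGraph.fromRel (fun a b =>
    match a, b with
    | Sum.inl i, Sum.inl j => (i : ℕ) + 1 = (j : ℕ)
    | Sum.inl i, Sum.inr _ => (i : ℕ) = B - 1
    | _, _ => False)

section aux
variable {B k : ℕ}

/-- parent function -/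
def gapPar (B k : ℕ) (hB : 1 ≤ B) : Fin B ⊕ Fin k → Fin B ⊕ Fin k
  | Sum.inl i => Sum.inl ⟨i.val - 1, lt_of_le_of_lt (Nat.sub_le _ _) i.isLt⟩
  | Sum.inr _ => Sum.inl ⟨B - 1, Nat.sub_lt hB one_pos⟩

lemma gapAdj_iff (a b : Fin B ⊕ Fin k) :
    (gapGraph B k).Adj a b ↔ a ≠ b ∧
      ((match a, b with
        | Sum.inl i, Sum.inl j => (i : ℕ) + 1 = (j : ℕ)
        | Sum.inl i, Sum.inr _ => (i : ℕ) = B - 1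
        | _, _ => False) ∨
       (match b, a with
        | Sum.inl i, Sum.inl j => (i : ℕ) + 1 = (j : ℕ)
        | Sum.inl i, Sum.inr _ => (i : ℕ) = B - 1
        | _, _ => False)) := SimpleGraph.fromRel_adj _ a b

lemma gapAdj_par (hB : 1 ≤ B) {a b : Fin B ⊕ Fin k} (h : (gapGraph B k).Adj a b) :
    b = gapPar B k hB a ∨ a = gapPar B k hB b := by
  rw [gapAdj_iff] at h
  obtain ⟨hne, h | h⟩ := h
  · match a, b with
    | Sum.inl i, Sum.inl j =>
      right; simp only [gapPar]
      congr 1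
      exact Fin.ext (by simp only [← h, Nat.add_sub_cancel])
    | Sum.inl i, Sum.inr j =>
      right; simp only [gapPar]
      congr 1
      exact Fin.ext h
    | Sum.inr i, Sum.inl j => exact absurd h (by simp)
    | Sum.inr i, Sum.inr j => exact absurd h (by simp)
  · match a, b with
    | Sum.inl i, Sum.inl j =>
      left; simp only [gapPar]
      congr 1
      exact Fin.ext (by simp only [← h, Nat.add_sub_cancel])
    | Sum.inr i, Sum.inl j =>
      left; simp only [gapPar]
      congr 1
      exact Fin.ext h
    | Sum.inl i, Sum.inr j => exact absurd h (by simp)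
    | Sum.inr i, Sum.inr j => exact absurd h (by simp)

lemma gapPar_root (hB : 1 ≤ B) : gapPar B k hB (Sum.inl ⟨0, hB⟩) = Sum.inl ⟨0, hB⟩ := by
  simp [gapPar]

/-- every walk to the root passes through the parent of the start -/
lemma gapPar_mem_support (hB : 1 ≤ B) : ∀ (n : ℕ) (w : Fin B ⊕ Fin k)
    (q : (gapGraph B k).Walk w (Sum.inl ⟨0, hB⟩)), q.length ≤ n →
    w ≠ Sum.inl ⟨0, hB⟩ → gapPar B k hB w ∈ q.support := by
  intro n
  induction n with
  | zero =>
    intro w q hlen hw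
    cases q with
    | nil => exact absurd rfl hw
    | cons h q' => simp at hlen
  | succ n ih =>
    intro w q hlen hw
    cases q with
    | nil => exact absurd rfl hw
    | @cons _ c _ h q' =>
      rcases gapAdj_par hB h with hc | hw2
      · rw [SimpleGraph.Walk.support_cons]
        exact List.mem_cons_of_mem _ (hc ▸ q'.start_mem_support)
      · have hcr : c ≠ Sum.inl ⟨0, hB⟩ := by
          rintro rfl
          rw [gapPar_root] at hw2
          exact hw (hw2)
        have hlen' : q'.length ≤ n := by
          simp only [SimpleGraph.Walk.length_cons] at hlen; omega
        have hmem : w ∈ q'.support := by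
          have := ih c q' hlen' hcr
          rwa [← hw2] at this
        have hdrop := ih w (q'.dropUntil w hmem)
          (le_trans (SimpleGraph.Walk.length_dropUntil_le q' hmem) hlen') hw
        rw [SimpleGraph.Walk.support_cons]
        exact List.mem_cons_of_mem _
          (SimpleGraph.Walk.support_dropUntil_subset q' hmem hdrop)

/-- uniqueness of paths to the root -/
lemma gapPath_unique (hB : 1 ≤ B) : ∀ (n : ℕ) (v : Fin B ⊕ Fin k)
    (p q : (gapGraph B k).Walk v (Sum.inl ⟨0, hB⟩)), p.IsPath → q.IsPath →
    p.length ≤ n → q.length ≤ n → p = q := by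
  intro n
  induction n with
  | zero =>
    intro v p q hp hq hpl hql
    cases p with
    | nil =>
      cases q with
      | nil => rfl
      | cons h q' => simp at hql
    | cons h p' => simp at hpl
  | succ n ih =>
    intro v p q hp hq hpl hql
    by_cases hv : v = Sum.inl ⟨0, hB⟩
    · subst hv
      rw [SimpleGraph.Walk.isPath_iff_eq_nil] at hp hq
      rw [hp, hq]
    · cases p with
      | nil => exact absurd rfl hv
      | @cons _ a _ ha p' =>
        cases q with
        | nil => exact absurd rfl hv
        | @cons _ b _ hb q' =>
          rw [SimpleGraph.Walk.cons_isPath_iff] at hp hq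
          have hav : a = gapPar B k hB v := by
            rcases gapAdj_par hB ha with h1 | h2
            · exact h1
            · exfalso
              have har : a ≠ Sum.inl ⟨0, hB⟩ := by
                rintro rfl
                rw [gapPar_root] at h2
                exact hv h2
              have := gapPar_mem_support hB p'.length a p' le_rfl har
              rw [← h2] at this
              exact hp.2 this
          have hbv : b = gapPar B k hB v := by
            rcases gapAdj_par hB hb with h1 | h2
            · exact h1
            · exfalso
              have hbr : b ≠ Sum.inl ⟨0, hB⟩ := by
                rintro rfl
                rw [gapPar_root] at h2
                exact hv h2
              have := gapPar_mem_support hB q'.length b q' le_rfl hbr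
              rw [← h2] at this
              exact hq.2 this
          subst hav
          subst hbv
          have hpq : p' = q' := by
            apply ih _ p' q' hp.1 hq.1
            · simp only [SimpleGraph.Walk.length_cons] at hpl; omega
            · simp only [SimpleGraph.Walk.length_cons] at hql; omega
          rw [hpq]

lemma gapPath_subsingleton (hB : 1 ≤ B) (v : Fin B ⊕ Fin k) :
    Subsingleton ((gapGraph B k).Path (Sum.inl ⟨0, hB⟩) v) := by
  constructor
  rintro ⟨p, hp⟩ ⟨q, hq⟩
  have hrev := gapPath_unique hB (max p.reverse.length q.reverse.length) v
    p.reverse q.reverse hp.reverse hq.reverse (le_max_left _ _) (le_max_right _ _)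
  have hpq : p = q := by
    have := congrArg SimpleGraph.Walk.reverse hrev
    rwa [SimpleGraph.Walk.reverse_reverse, SimpleGraph.Walk.reverse_reverse] at this
  exact Subtype.ext hpq

lemma gapReach_inl (hB : 1 ≤ B) : ∀ (i : ℕ) (h : i < B),
    (gapGraph B k).Reachable (Sum.inl ⟨0, hB⟩) (Sum.inl ⟨i, h⟩) := by
  intro i
  induction i with
  | zero => intro h; rfl
  | succ i ih =>
    intro h
    refine (ih (by omega)).trans (SimpleGraph.Adj.reachable ?_)
    rw [gapAdj_iff]
    refine ⟨by simp [Fin.ext_iff], Or.inl rfl⟩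

lemma gapReach_inr (hB : 1 ≤ B) (j : Fin k) :
    (gapGraph B k).Reachable (Sum.inl ⟨0, hB⟩) (Sum.inr j : Fin B ⊕ Fin k) := by
  refine (gapReach_inl hB (B - 1) (Nat.sub_lt hB one_pos)).trans
    (SimpleGraph.Adj.reachable ?_)
  rw [gapAdj_iff]
  exact ⟨by simp, Or.inl rfl⟩

lemma gapPath_nonempty (hB : 1 ≤ B) (j : Fin k) :
    Nonempty ((gapGraph B k).Path (Sum.inl ⟨0, hB⟩) (Sum.inr j)) :=
  ⟨(gapReach_inr hB j).some.toPath⟩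

lemma gapEdge_card (hB : 1 ≤ B) : (gapGraph B k).edgeFinset.card ≤ B + k - 1 := by
  have hsub : (gapGraph B k).edgeFinset ⊆
      ((Finset.univ : Finset (Fin B ⊕ Fin k)).erase (Sum.inl ⟨0, hB⟩)).image
        (fun v => s(v, gapPar B k hB v)) := by
    intro e he
    rw [SimpleGraph.mem_edgeFinset] at he
    induction e with
    | _ a b =>
      rw [SimpleGraph.mem_edgeSet] at he
      have hne := he.ne
      rcases gapAdj_par hB he with h1 | h2
      · refine Finset.mem_image.mpr ⟨a, ?_, by rw [← h1]⟩
        refine Finset.mem_erase.mpr ⟨?_, Finset.mem_univ _⟩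
        rintro rfl
        rw [gapPar_root] at h1
        exact hne h1.symm
      · refine Finset.mem_image.mpr ⟨b, ?_, ?_⟩
        · refine Finset.mem_erase.mpr ⟨?_, Finset.mem_univ _⟩
          rintro rfl
          rw [gapPar_root] at h2
          exact hne h2
        · rw [← h2, Sym2.eq_swap]
  calc (gapGraph B k).edgeFinset.card ≤ _ := Finset.card_le_card hsub
    _ ≤ ((Finset.univ : Finset (Fin B ⊕ Fin k)).erase (Sum.inl ⟨0, hB⟩)).card :=
        Finset.card_image_le
    _ = B + k - 1 := by
        rw [Finset.card_erase_of_mem (Finset.mem_univ _)]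
        simp

end aux

theorem stmt13 (B k : ℕ) (hB : 1 ≤ B) (hk : 2 ≤ k) :
    let Gg := gapGraph B k
    let r : Fin B ⊕ Fin k := Sum.inl ⟨0, hB⟩
    let prz : Fin B ⊕ Fin k → ℝ := Sum.elim (fun _ => 0) (fun _ => 1)
    -- the assignment: each path ending at a leaf `u_i` (in this graph, the unique
    -- `r`–`u_i` path) carries flow `B / (B + k - 1)`, all other paths carry flow `0`
    let f : ∀ v : Fin B ⊕ Fin k, Gg.Path r v → ℝ := fun v _ =>
      Sum.elim (fun _ => (0 : ℝ)) (fun _ => (B : ℝ) / ((B : ℝ) + (k : ℝ) - 1)) v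
    let x : Sym2 (Fin B ⊕ Fin k) → ℝ := fun _ => (B : ℝ) / ((B : ℝ) + (k : ℝ) - 1)
    -- constraint (X)
    (∀ e ∈ Gg.edgeSet, ∀ v : Fin B ⊕ Fin k,
        (∑ᶠ p ∈ {p : Gg.Path r v | e ∈ (p : Gg.Walk r v).edges}, f v p) ≤ x e) ∧
    -- constraint (F)
    (∀ v : Fin B ⊕ Fin k, (∑ᶠ p : Gg.Path r v, f v p) ≤ 1) ∧
    -- constraint (B)
    ((∑ᶠ e ∈ Gg.edgeSet, x e) ≤ (B : ℝ)) ∧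
    -- objective value
    (∑ v : Fin B ⊕ Fin k, prz v * ∑ᶠ p : Gg.Path r v, f v p)
      = (k : ℝ) * (B : ℝ) / ((B : ℝ) + (k : ℝ) - 1) := by
  intro Gg r prz f x
  have hD : (0 : ℝ) < (B : ℝ) + (k : ℝ) - 1 := by
    have h1 : (1 : ℝ) ≤ (B : ℝ) := by exact_mod_cast hB
    have h2 : (2 : ℝ) ≤ (k : ℝ) := by exact_mod_cast hk
    linarith
  set c : ℝ := (B : ℝ) / ((B : ℝ) + (k : ℝ) - 1) with hc
  have hc0 : 0 ≤ c := by positivity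
  have hc1 : c ≤ 1 := by
    rw [hc, div_le_one hD]
    have h2 : (2 : ℝ) ≤ (k : ℝ) := by exact_mod_cast hk
    linarith
  have hsub : ∀ v, Subsingleton (Gg.Path r v) := gapPath_subsingleton hB
  have hne : ∀ j : Fin k, Nonempty (Gg.Path r (Sum.inr j)) := gapPath_nonempty hB
  have hfin_inr : ∀ j : Fin k, (∑ᶠ p : Gg.Path r (Sum.inr j), f (Sum.inr j) p) = c := by
    intro j
    haveI := hsub (Sum.inr j)
    haveI : Unique (Gg.Path r (Sum.inr j)) :=
      { default := (hne j).some, uniq := fun a => Subsingleton.elim _ _ }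
    rw [finsum_unique]
    rfl
  refine ⟨?_, ?_, ?_, ?_⟩
  · -- constraint X
    intro e _ v
    match v with
    | Sum.inl i =>
      have h0 : (∑ᶠ p ∈ {p : Gg.Path r (Sum.inl i) | e ∈ (p : Gg.Walk r (Sum.inl i)).edges},
          f (Sum.inl i) p) = 0 :=
        finsum_mem_of_eqOn_zero (fun p _ => rfl)
      rw [h0]
      exact hc0
    | Sum.inr j =>
      haveI := hsub (Sum.inr j)
      have hS : {p : Gg.Path r (Sum.inr j) | e ∈ (p : Gg.Walk r (Sum.inr j)).edges}.Subsingleton :=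
        fun a _ b _ => Subsingleton.elim a b
      rcases hS.eq_empty_or_singleton with h | ⟨p0, h⟩
      · rw [h, finsum_mem_empty]; exact hc0
      · rw [h, finsum_mem_singleton]
        exact le_refl _
  · -- constraint F
    intro v
    match v with
    | Sum.inl i =>
      have h0 : (∑ᶠ p : Gg.Path r (Sum.inl i), f (Sum.inl i) p) = 0 := by
        apply finsum_eq_zero_of_forall_eq_zero
        intro p; rfl
      rw [h0]; exact zero_le_one
    | Sum.inr j => rw [hfin_inr j]; exact hc1
  · -- constraint B
    have hsum : (∑ᶠ e ∈ Gg.edgeSet, x e) = Gg.edgeFinset.card • c := by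
      rw [← SimpleGraph.coe_edgeFinset, finsum_mem_coe_finset, Finset.sum_const]
    rw [hsum, nsmul_eq_mul]
    calc (Gg.edgeFinset.card : ℝ) * c ≤ ((B + k - 1 : ℕ) : ℝ) * c := by
          apply mul_le_mul_of_nonneg_right _ hc0
          exact_mod_cast gapEdge_card (k := k) hB
      _ = ((B : ℝ) + (k : ℝ) - 1) * c := by
          congr 1
          have h1 : 1 ≤ B + k := by omega
          push_cast [Nat.cast_sub h1]
          ring
      _ = (B : ℝ) := by
          rw [hc, mul_div_cancel₀]
          exact ne_of_gt hD
  · -- objective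
    rw [Fintype.sum_sum_type]
    have h1 : ∀ i : Fin B, prz (Sum.inl i) * (∑ᶠ p : Gg.Path r (Sum.inl i), f (Sum.inl i) p) = 0 := by
      intro i
      simp only [prz, Sum.elim_inl, zero_mul]
    have h2 : ∀ j : Fin k, prz (Sum.inr j) * (∑ᶠ p : Gg.Path r (Sum.inr j), f (Sum.inr j) p) = c := by
      intro j
      simp only [prz, Sum.elim_inr, one_mul]
      exact hfin_inr j
    rw [Finset.sum_congr rfl (fun i _ => h1 i), Finset.sum_congr rfl (fun j _ => h2 j)]
    simp [hc, mul_div_assoc]
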